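/- arXiv:0808.1408 — 4 statements merged into one kernel-verified Lean document; each statement's English description precedes it below -/
import Mathlib

section
/- For positive reals a, b, the function ρ ↦ Σ_{j≥0} (b + ja)^{-(1+ρ)} - (1/a)·(1/ρ) extends continuously to ρ = 0; i.e., the series Σ_{j≥0} 1/(b+ja)^{1+ρ} equals (1/a)(1/ρ) + φ(ρ) where φ has a finite limit as ρ → 0⁺. -/
/-!
Write `b / a = m + c` with `m ∈ ℕ` and `c ∈ (0, 1]`. For real `s > 1` the series is
`a^{-s} (ζ(c, s) - ∑_{k < m} (k + c)^{-s})`, with `ζ(c, ·)` the Hurwitz zeta function.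
Since `ζ(c, s) - ζ(s)` is entire and `ζ(s) - 1/(s - 1) → γ`, the bracket minus `1/(s - 1)` has a
limit at `s = 1`; multiplying by the entire factor `a^{-s}` turns the polar part into
`a^{-1}/(s - 1)` plus a difference quotient of `a^{-s}`, which converges to its derivative.
-/

open Filter Topology Complex Set HurwitzZeta

theorem Filter.Tendsto.mul_sub_div_sub {𝕜 : Type*} [NontriviallyNormedField 𝕜]
    {f g : 𝕜 → 𝕜} {z r L : 𝕜}
    (hf : Tendsto (fun s => f s - r / (s - z)) (𝓝[≠] z) (𝓝 L))
    (hg : DifferentiableAt 𝕜 g z) :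
    Tendsto (fun s => g s * f s - g z * r / (s - z)) (𝓝[≠] z)
      (𝓝 (g z * L + deriv g z * r)) := by
  refine ((hg.continuousAt.tendsto.mono_left nhdsWithin_le_nhds).mul hf).add
    (hg.hasDerivAt.tendsto_slope.mul_const r) |>.congr fun s => ?_
  rw [slope_def_field]
  ring

theorem tendsto_hurwitzZeta_sub_one_div (c : UnitAddCircle) :
    Tendsto (fun s => hurwitzZeta c s - 1 / (s - 1)) (𝓝[≠] 1)
      (𝓝 (hurwitzZeta c 1 - riemannZeta 1 + Real.eulerMascheroniConstant)) := by
  have hdiff := (differentiable_hurwitzZeta_sub_hurwitzZeta c 0).continuous.tendsto 1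
  rw [hurwitzZeta_zero] at hdiff
  refine (hdiff.mono_left nhdsWithin_le_nhds).add tendsto_riemannZeta_sub_one_div
    |>.congr fun s => ?_
  ring

theorem continuous_sum_one_div_nat_add_cpow {c : ℝ} (hc : 0 < c) (m : ℕ) :
    Continuous fun s : ℂ => ∑ k ∈ Finset.range m, 1 / ((k : ℂ) + c) ^ s := by
  refine continuous_finsetSum _ fun k _ => ?_
  have hk : (k : ℂ) + c ≠ 0 := by exact_mod_cast (by positivity : (k : ℝ) + c ≠ 0)
  exact continuous_const.div (continuous_id.const_cpow (Or.inl hk))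
    fun s => cpow_ne_zero_iff.mpr (Or.inl hk)

theorem hasSum_one_div_nat_add_add_cpow {c : ℝ} (hc : c ∈ Icc 0 1) (m : ℕ) {s : ℂ}
    (hs : 1 < s.re) :
    HasSum (fun j : ℕ => 1 / ((j + m : ℂ) + c) ^ s)
      (hurwitzZeta c s - ∑ k ∈ Finset.range m, 1 / ((k : ℂ) + c) ^ s) := by
  have h := (hasSum_nat_add_iff' m (f := fun n : ℕ => 1 / ((n : ℂ) + c) ^ s)).mpr
    (hasSum_hurwitzZeta_of_one_lt_re hc hs)
  simpa only [Nat.cast_add] using h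

theorem hasSum_add_mul_rpow_neg {a b c : ℝ} {m : ℕ} (ha : 0 < a) (hc : c ∈ Icc 0 1)
    (hb : b = a * (m + c)) {σ : ℝ} (hσ : 1 < σ) :
    HasSum (fun j : ℕ => (b + j * a) ^ (-σ))
      ((a : ℂ) ^ (-(σ : ℂ)) *
        (hurwitzZeta c σ - ∑ k ∈ Finset.range m, 1 / ((k : ℂ) + c) ^ (σ : ℂ))).re := by
  have h := (hasSum_one_div_nat_add_add_cpow hc m (s := σ) (by simpa)).mul_left
    ((a : ℂ) ^ (-(σ : ℂ)))
  convert hasSum_re h using 2 with j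
  have hj : 0 ≤ (j : ℝ) + m + c := by positivity [hc.1]
  rw [show b + j * a = a * (j + m + c) by rw [hb]; ring, Real.mul_rpow ha.le hj,
    ← ofReal_re (_ * _)]
  push_cast [ofReal_cpow ha.le, ofReal_cpow hj]
  rw [cpow_neg (_ + _), one_div]

theorem exists_nat_add_mem_Ioc {x : ℝ} (hx : 0 < x) :
    ∃ m : ℕ, ∃ c ∈ Ioc (0 : ℝ) 1, x = m + c := by
  have hceil : 1 ≤ ⌈x⌉₊ := Nat.one_le_iff_ne_zero.mpr (Nat.ceil_pos.mpr hx).ne'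
  refine ⟨⌈x⌉₊ - 1, x - (⌈x⌉₊ - 1 : ℕ), ?_, by ring⟩
  push_cast [hceil]
  exact ⟨by linarith [Nat.ceil_lt_add_one hx.le], by linarith [Nat.le_ceil x]⟩

theorem tendsto_one_add_ofReal_nhdsGT_zero :
    Tendsto (fun ρ : ℝ => 1 + (ρ : ℂ)) (𝓝[>] 0) (𝓝[≠] 1) := by
  refine tendsto_nhdsWithin_of_tendsto_nhds_of_eventually_within _ ?_ ?_
  · exact ((continuous_const.add continuous_ofReal).tendsto' 0 1 (by simp)).mono_left
      nhdsWithin_le_nhds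
  · filter_upwards [self_mem_nhdsWithin] with ρ (hρ : 0 < ρ)
    simp [hρ.ne']

/-- Dirichlet §2: Σ_{j≥0} (b+ja)^{-(1+ρ)} = (1/a)(1/ρ) + φ(ρ) with φ having a
finite limit as ρ → 0⁺. -/
theorem arithmetic_progression_zeta_pole (a b : ℝ) (ha : 0 < a) (hb : 0 < b) :
    ∃ ℓ : ℝ, Filter.Tendsto
      (fun ρ : ℝ => (∑' j : ℕ, (b + j * a) ^ (-(1 + ρ))) - (1 / a) * (1 / ρ))
      (nhdsWithin 0 (Set.Ioi 0)) (nhds ℓ) := by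
  obtain ⟨m, c, hc, hx⟩ := exists_nat_add_mem_Ioc (div_pos hb ha)
  set S : ℂ → ℂ := fun s => ∑ k ∈ Finset.range m, 1 / ((k : ℂ) + c) ^ s
  have hpole : Tendsto (fun s => (hurwitzZeta c s - S s) - 1 / (s - 1)) (𝓝[≠] 1)
      (𝓝 (hurwitzZeta c 1 - riemannZeta 1 + Real.eulerMascheroniConstant - S 1)) :=
    ((tendsto_hurwitzZeta_sub_one_div c).sub
      (((continuous_sum_one_div_nat_add_cpow hc.1 m).tendsto 1).mono_left nhdsWithin_le_nhds))
      |>.congr fun s => by ring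
  have hpow : DifferentiableAt ℂ (fun s : ℂ => (a : ℂ) ^ (-s)) 1 :=
    differentiableAt_id.neg.const_cpow (Or.inl (ofReal_ne_zero.mpr ha.ne'))
  refine ⟨_, ((continuous_re.tendsto _).comp
    ((hpole.mul_sub_div_sub hpow).comp tendsto_one_add_ofReal_nhdsGT_zero)).congr' ?_⟩
  filter_upwards [self_mem_nhdsWithin] with ρ (hρ : 0 < ρ)
  have hb' : b = a * (m + c) := by rw [← hx]; field_simp
  have hpolar : (a : ℂ) ^ (-(1 : ℂ)) * 1 / ((1 + ρ) - 1) = ((1 / a * (1 / ρ) : ℝ) : ℂ) := by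
    rw [cpow_neg_one]; push_cast; ring
  rw [(hasSum_add_mul_rpow_neg ha ⟨hc.1.le, hc.2⟩ hb' (by linarith : 1 < 1 + ρ)).tsum_eq]
  simp only [Function.comp_apply, hpolar, sub_re, ofReal_re, ofReal_add, ofReal_one, S]
end

section
/- For any real α with 0 < α < 1, ∫₀¹ dx/(x - e^{2απi}) = log(2 sin(απ)) + (π/2)(1 - 2α)·i. -/
/-!
With `c = e^{2it}`, `0 < t < π`, the segment `[0, 1] - c` avoids the branch cut `(-∞, 0]`, so
`x ↦ log (x - c)` is an antiderivative of the integrand and the integral is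
`log (1 - c) - log (-c)`. Both values are read off from the polar forms
`1 - e^{2it} = 2 sin t · e^{i(t - π/2)}` and `-e^{2it} = e^{i(2t - π)}`, whose arguments lie in
`(-π, π)`.
-/

open Complex
open scoped Real

namespace Complex

lemma ofReal_add_mem_slitPlane {x : ℝ} (hx : 0 ≤ x) {z : ℂ} (hz : z ∈ slitPlane) :
    (x : ℂ) + z ∈ slitPlane := by
  rw [mem_slitPlane_iff] at hz ⊢
  simp only [add_re, ofReal_re, add_im, ofReal_im, zero_add]
  exact hz.imp (fun h ↦ by linarith) id

lemma exp_mem_slitPlane_of_im_mem_Ioo {z : ℂ} (h₁ : -π < z.im) (h₂ : z.im < π) :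
    exp z ∈ slitPlane := by
  refine mem_slitPlane_iff_arg.2 ⟨?_, exp_ne_zero z⟩
  rw [← log_im, log_exp h₁ h₂.le]
  exact h₂.ne

theorem integral_one_div_ofReal_sub {a b : ℝ} {c : ℂ}
    (hc : ∀ x ∈ Set.uIcc a b, (x : ℂ) - c ∈ slitPlane) :
    ∫ x in a..b, 1 / ((x : ℂ) - c) = log (b - c) - log (a - c) := by
  refine intervalIntegral.integral_eq_sub_of_hasDerivAt (f := fun x : ℝ ↦ log ((x : ℂ) - c))
    (fun x hx ↦ ?_) ?_
  · have hsub : HasDerivAt (fun y : ℝ ↦ (y : ℂ) - c) 1 x := by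
      simpa using (hasDerivAt_id x).ofReal_comp.sub_const c
    exact hsub.clog_real (hc x hx)
  · exact (continuousOn_const.div (by fun_prop)
      fun x hx ↦ slitPlane_ne_zero (hc x hx)).intervalIntegrable

lemma one_sub_exp_two_mul_mul_I (z : ℂ) :
    1 - exp (2 * z * I) = 2 * sin z * exp ((z - π / 2) * I) := by
  rw [show (z - π / 2) * I = z * I + -π / 2 * I by ring, exp_add, exp_neg_pi_div_two_mul_I, sin,
    show 2 * z * I = z * I + z * I by ring, exp_add]
  have h : exp (-z * I) * exp (z * I) = 1 := by rw [← exp_add]; simp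
  linear_combination (-1 : ℂ) * h + (exp (-z * I) * exp (z * I) - exp (z * I) ^ 2) * I_sq

lemma log_one_sub_exp_two_mul_mul_I {t : ℝ} (h₀ : 0 < t) (h₁ : t < π) :
    log (1 - exp (2 * t * I)) = Real.log (2 * Real.sin t) + (t - π / 2) * I := by
  have hsin : 0 < 2 * Real.sin t := by linarith [Real.sin_pos_of_pos_of_lt_pi h₀ h₁]
  have him : (((t : ℂ) - π / 2) * I).im = t - π / 2 := by simp
  rw [one_sub_exp_two_mul_mul_I, show 2 * sin (t : ℂ) = (2 * Real.sin t : ℝ) by push_cast; rfl,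
    log_ofReal_mul hsin (exp_ne_zero _), log_exp] <;> rw [him] <;> linarith

lemma neg_exp_two_mul_mul_I_mem_slitPlane {t : ℝ} (h₀ : 0 < t) (h₁ : t < π) :
    -exp (2 * t * I) ∈ slitPlane := by
  have him : (2 * t * I - π * I : ℂ).im = 2 * t - π := by simp
  rw [← exp_sub_pi_mul_I]
  apply exp_mem_slitPlane_of_im_mem_Ioo <;> rw [him] <;> linarith

lemma log_neg_exp_two_mul_mul_I {t : ℝ} (h₀ : 0 < t) (h₁ : t < π) :
    log (-exp (2 * t * I)) = (2 * t - π) * I := by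
  have him : (2 * t * I - π * I : ℂ).im = 2 * t - π := by simp
  rw [← exp_sub_pi_mul_I, log_exp, sub_mul] <;> rw [him] <;> linarith

end Complex

/-- Dirichlet §4: ∫₀¹ dx/(x - e^{2απi}) = log(2 sin απ) + (π/2)(1-2α)√-1. -/
theorem integral_inv_sub_root_of_unity (α : ℝ) (h0 : 0 < α) (h1 : α < 1) :
    ∫ x in (0:ℝ)..1, (1 : ℂ) / ((x : ℂ) - Complex.exp (2 * α * Real.pi * Complex.I)) =
      (Real.log (2 * Real.sin (α * Real.pi)) : ℂ) +
        ((Real.pi / 2 : ℝ) : ℂ) * ((1 - 2 * α : ℝ) : ℂ) * Complex.I := by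
  have ht₀ : 0 < α * π := by positivity
  have ht₁ : α * π < π := by nlinarith [Real.pi_pos]
  have hexp : 2 * (α : ℂ) * π * I = 2 * ((α * π : ℝ) : ℂ) * I := by push_cast; ring
  rw [hexp, integral_one_div_ofReal_sub fun x hx ↦ ?_, ofReal_one, ofReal_zero, zero_sub,
    log_one_sub_exp_two_mul_mul_I ht₀ ht₁, log_neg_exp_two_mul_mul_I ht₀ ht₁]
  · push_cast
    ring
  · rw [sub_eq_add_neg]
    exact ofReal_add_mem_slitPlane (by simpa using hx.1)
      (neg_exp_two_mul_mul_I_mem_slitPlane ht₀ ht₁)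
end

section
/- Let p be a prime with p ≡ 1 (mod 4). Writing g, h for the integers with 2^{(p+1)/2} Π_a sin(aπ/p) = g - h√p and 2^{(p+1)/2} Π_b sin(bπ/p) = g + h√p (a over quadratic residues, b over nonresidues in (0,p)), one has g² - p h² = 4p; consequently p divides g, and writing g = pk we get h² - pk² = -4, so h ≠ 0 and the ratio Π_b sin(bπ/p) / Π_a sin(aπ/p) = (k√p + h)/(k√p - h) ≠ 1. -/
/-!
Quadratic residues and nonresidues together exhaust `1, …, p - 1`, so
`Pa * Pb = ∏_{0<m<p} sin (mπ/p) = p / 2^(p-1)`, which is the absolute value of the identity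
`∏_{0<m<p} (1 - ζ^m) = p` for a primitive `p`-th root of unity `ζ`. Multiplying the two given
expressions for `g ∓ h√p` therefore gives `g² - p h² = 4p`, and the rest is arithmetic:
`p ∣ g²`, the Pell equation `h² - p k² = -4` has no solution with `h = 0` for odd `p`, and
`(x + y)/(x - y) = 1` forces `y = 0`.
-/

open Finset Real

theorem norm_one_sub_cexp_two_pi_I_div_pow {n k : ℕ} (hk : k ≤ n) :
    ‖1 - Complex.exp (2 * π * Complex.I / n) ^ k‖ = 2 * sin (k * π / n) := by
  have hexp : Complex.exp (2 * π * Complex.I / n) ^ k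
      = Complex.exp (Complex.I * ↑(2 * (k * π / n))) := by
    rw [← Complex.exp_nat_mul]; push_cast; ring_nf
  rw [hexp, norm_sub_rev, Complex.norm_exp_I_mul_ofReal_sub_one,
    mul_div_cancel_left₀ _ two_ne_zero, Real.norm_eq_abs, abs_of_nonneg]
  have hnonneg : (0 : ℝ) ≤ k * π / n := by positivity
  refine mul_nonneg zero_le_two (sin_nonneg_of_nonneg_of_le_pi hnonneg ?_)
  rcases n.eq_zero_or_pos with rfl | hn
  · simp [pi_nonneg]
  · rw [div_le_iff₀ (by positivity), mul_comm]
    gcongr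

theorem prod_two_mul_sin_mul_pi_div {n : ℕ} (hn : n ≠ 0) :
    ∏ k ∈ Ioo 0 n, 2 * sin (k * π / n) = n := by
  obtain ⟨n, rfl⟩ := Nat.exists_eq_add_one_of_ne_zero hn
  have key := congrArg (‖·‖) (Complex.isPrimitiveRoot_exp (n + 1) hn).prod_one_sub_pow_eq_order
  simp only [norm_prod] at key
  rw [← Nat.cast_add_one, Complex.norm_natCast] at key
  rw [← Finset.Ico_add_one_left_eq_Ioo, prod_Ico_eq_prod_range, zero_add, Nat.add_sub_cancel]
  refine (prod_congr rfl fun k hk => ?_).trans key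
  rw [norm_one_sub_cexp_two_pi_I_div_pow (by simp at hk; omega), add_comm 1 k]

theorem two_pow_pred_mul_prod_sin_mul_pi_div {n : ℕ} (hn : n ≠ 0) :
    2 ^ (n - 1) * ∏ k ∈ Ioo 0 n, sin (k * π / n) = n := by
  have h := prod_two_mul_sin_mul_pi_div hn
  rwa [prod_mul_distrib, prod_const, Nat.card_Ioo, Nat.sub_zero] at h

theorem legendreSym.prod_eq_one_mul_prod_eq_neg_one {M : Type*} [CommMonoid M] (p : ℕ)
    [Fact p.Prime] (f : ℕ → M) :
    (∏ m ∈ (Ioo 0 p).filter (fun m : ℕ => legendreSym p m = 1), f m) *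
      ∏ m ∈ (Ioo 0 p).filter (fun m : ℕ => legendreSym p m = -1), f m =
        ∏ m ∈ Ioo 0 p, f m := by
  rw [← prod_filter_mul_prod_filter_not (Ioo 0 p) (fun m : ℕ => legendreSym p m = 1)]
  congr 2
  refine filter_congr fun m hm => ?_
  have hm0 : ((m : ℤ) : ZMod p) ≠ 0 := by
    rw [mem_Ioo] at hm
    rw [Int.cast_natCast, Ne, ZMod.natCast_eq_zero_iff]
    exact Nat.not_dvd_of_pos_of_lt hm.1 hm.2
  rcases legendreSym.eq_one_or_neg_one p hm0 with h | h <;> simp [h]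

theorem Prime.dvd_of_sq_sub_mul_sq_eq_mul {p g h c : ℤ} (hp : Prime p)
    (H : g ^ 2 - p * h ^ 2 = c * p) : p ∣ g :=
  hp.dvd_of_dvd_pow (n := 2) ⟨c + h ^ 2, by linear_combination H⟩

theorem sq_sub_mul_sq_eq_neg_of_eq_mul {p g h c k : ℤ} (hp : p ≠ 0)
    (H : g ^ 2 - p * h ^ 2 = c * p) (hk : g = p * k) : h ^ 2 - p * k ^ 2 = -c := by
  subst hk
  exact mul_left_cancel₀ hp (by linear_combination -H)

theorem add_div_sub_ne_one {K : Type*} [Field K] [CharZero K] (x : K) {y : K} (hy : y ≠ 0) :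
    (x + y) / (x - y) ≠ 1 := by
  intro H
  have hden : x - y ≠ 0 := by
    rintro hden
    rw [hden, div_zero] at H
    exact zero_ne_one H
  rw [div_eq_one_iff_eq hden] at H
  exact hy (by linear_combination H / 2)

/-- Dirichlet §4: for p ≡ 1 (mod 4), with
2^{(p+1)/2} Π_a sin(aπ/p) = g - h√p and 2^{(p+1)/2} Π_b sin(bπ/p) = g + h√p,
one has g² - ph² = 4p, p ∣ g, and for g = pk: h² - pk² = -4, h ≠ 0, and
Π_b sin(bπ/p) / Π_a sin(aπ/p) = (k√p + h)/(k√p - h) ≠ 1. -/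
theorem cyclotomic_pell_one_mod_four (p : ℕ) [Fact p.Prime] (hp : p % 4 = 1)
    (g h : ℤ) (Pa Pb : ℝ)
    (hPa : Pa = ∏ m ∈ (Finset.Ioo 0 p).filter (fun m : ℕ => legendreSym p (m : ℤ) = 1),
      Real.sin (m * Real.pi / p))
    (hPb : Pb = ∏ m ∈ (Finset.Ioo 0 p).filter (fun m : ℕ => legendreSym p (m : ℤ) = -1),
      Real.sin (m * Real.pi / p))
    (hg : (2 : ℝ) ^ ((p + 1) / 2) * Pa = (g : ℝ) - (h : ℝ) * Real.sqrt p)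
    (hh : (2 : ℝ) ^ ((p + 1) / 2) * Pb = (g : ℝ) + (h : ℝ) * Real.sqrt p) :
    g ^ 2 - (p : ℤ) * h ^ 2 = 4 * p ∧ (p : ℤ) ∣ g ∧
      ∀ k : ℤ, g = (p : ℤ) * k →
        h ^ 2 - (p : ℤ) * k ^ 2 = -4 ∧ h ≠ 0 ∧
        Pb / Pa = ((k : ℝ) * Real.sqrt p + (h : ℝ)) / ((k : ℝ) * Real.sqrt p - (h : ℝ)) ∧
        Pb / Pa ≠ 1 := by
  have hprime : p.Prime := Fact.out
  have hsqrt : √(p : ℝ) ^ 2 = p := sq_sqrt (Nat.cast_nonneg p)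
  have hprod : (2 : ℝ) ^ ((p + 1) / 2) * Pa * (2 ^ ((p + 1) / 2) * Pb) = 4 * p := by
    rw [mul_mul_mul_comm, ← pow_add, hPa, hPb, legendreSym.prod_eq_one_mul_prod_eq_neg_one,
      show (p + 1) / 2 + (p + 1) / 2 = p - 1 + 2 by omega, pow_add, mul_right_comm,
      two_pow_pred_mul_prod_sin_mul_pi_div hprime.ne_zero]
    ring
  have hnorm : g ^ 2 - (p : ℤ) * h ^ 2 = 4 * p := by
    rw [hg, hh] at hprod
    exact_mod_cast (by linear_combination hprod + (h : ℝ) ^ 2 * hsqrt :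
      (g : ℝ) ^ 2 - p * h ^ 2 = 4 * p)
  refine ⟨hnorm, (Nat.prime_iff_prime_int.mp hprime).dvd_of_sq_sub_mul_sq_eq_mul hnorm,
    fun k hk => ?_⟩
  have hpell := sq_sub_mul_sq_eq_neg_of_eq_mul (by exact_mod_cast hprime.ne_zero) hnorm hk
  have hh0 : h ≠ 0 := by
    rintro rfl
    have h4 : (p : ℤ) ∣ 2 ^ 2 := ⟨k ^ 2, by linear_combination hpell⟩
    have hp2 : p = 2 := (Nat.prime_dvd_prime_iff_eq hprime Nat.prime_two).mp
      (Int.natCast_dvd_natCast.mp (Int.Prime.dvd_pow' hprime h4))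
    omega
  have hratio : Pb / Pa = ((k : ℝ) * √p + h) / ((k : ℝ) * √p - h) := by
    have hs : √(p : ℝ) ≠ 0 := Real.sqrt_ne_zero'.mpr (by exact_mod_cast hprime.pos)
    rw [← mul_div_mul_left Pb Pa (pow_ne_zero ((p + 1) / 2) two_ne_zero), hh, hg,
      ← mul_div_mul_left ((k : ℝ) * √p + h) _ hs, hk]
    push_cast
    congr 1 <;> linear_combination -(k : ℝ) * hsqrt
  exact ⟨hpell, hh0, hratio, hratio ▸ add_div_sub_ne_one _ (by exact_mod_cast hh0)⟩
end

section
/- Let p be an odd prime and let χ be the quadratic character mod p (the Legendre symbol). Then L(1, χ) = Σ_{n≥1} (n/p)/n > 0; in particular L(1,χ) ≠ 0. -/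
/-!
For `σ > 1` every factor `(1 - χ(q) q^{-σ})⁻¹` of the Euler product of a real character `χ` is a
nonnegative real number, so `L(σ, χ) ≥ 0`. A nontrivial `χ` is periodic with mean zero, so its
partial sums are bounded and Abel summation makes `∑ χ(n) n^{-σ}` converge uniformly on
`σ ≥ 1`; hence the series at `σ = 1` converges to `lim_{σ → 1⁺} L(σ, χ) = L(1, χ)`, which is
therefore `≥ 0`, and it is `≠ 0` by the nonvanishing of Dirichlet `L`-functions at `s = 1`.
-/

open Finset Filter Topology Set Complex

theorem norm_sum_range_smul_le_of_antitone {E : Type*} [NormedAddCommGroup E] [NormedSpace ℝ E]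
    {c : ℕ → ℝ} {z : ℕ → E} {B : ℝ} (hc : Antitone c) (hc0 : ∀ i, 0 ≤ c i)
    (hz : ∀ k, ‖∑ i ∈ range k, z i‖ ≤ B) (n : ℕ) :
    ‖∑ i ∈ range n, c i • z i‖ ≤ B * c 0 := by
  rcases n with _ | n
  · simpa using mul_nonneg ((norm_nonneg _).trans (hz 0)) (hc0 0)
  have hsub : ∀ i, 0 ≤ c i - c (i + 1) := fun i => sub_nonneg.mpr (hc i.le_succ)
  rw [sum_range_by_parts, Nat.add_sub_cancel]
  calc ‖c n • ∑ i ∈ range (n + 1), z i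
          - ∑ i ∈ range n, (c (i + 1) - c i) • ∑ j ∈ range (i + 1), z j‖
      ≤ c n * B + ∑ i ∈ range n, (c i - c (i + 1)) * B := by
        refine (norm_sub_le _ _).trans (add_le_add ?_ ((norm_sum_le _ _).trans ?_))
        · rw [norm_smul, Real.norm_of_nonneg (hc0 n)]
          exact mul_le_mul_of_nonneg_left (hz _) (hc0 n)
        · refine sum_le_sum fun i _ => ?_
          rw [norm_smul, Real.norm_eq_abs, abs_sub_comm, abs_of_nonneg (hsub i)]
          exact mul_le_mul_of_nonneg_left (hz _) (hsub i)
    _ = B * c 0 := by rw [← sum_mul, sum_range_sub' c n]; ring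

theorem sum_range_add_eq_zero_of_periodic {a : ℕ → ℝ} {m : ℕ}
    (ha : Function.Periodic a m) (hsum : ∑ i ∈ range m, a i = 0) (k : ℕ) :
    ∑ i ∈ range m, a (k + i) = 0 := by
  induction k with
  | zero => simpa using hsum
  | succ k ih =>
    have h := (sum_range_succ' (fun i => a (k + i)) m).symm.trans (sum_range_succ _ m)
    rw [ih, ha k, add_zero, zero_add, add_eq_right] at h
    simpa only [add_assoc, add_comm 1] using h

theorem abs_sum_range_le_of_periodic {a : ℕ → ℝ} {m : ℕ} (hm : 0 < m)
    (ha : Function.Periodic a m) (hsum : ∑ i ∈ range m, a i = 0) (N : ℕ) :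
    |∑ i ∈ range N, a i| ≤ ∑ i ∈ range m, |a i| := by
  induction N using Nat.strong_induction_on with
  | _ N ih =>
    rcases lt_or_ge N m with hN | hN
    · exact (abs_sum_le_sum_abs _ _).trans
        (sum_le_sum_of_subset_of_nonneg (range_subset_range.mpr hN.le) fun _ _ _ => abs_nonneg _)
    · obtain ⟨N, rfl⟩ := Nat.exists_eq_add_of_le' hN
      rw [sum_range_add, sum_range_add_eq_zero_of_periodic ha hsum, add_zero]
      exact ih N (by omega)

theorem Finset.sum_range_eq_sum_zmod {M : Type*} [AddCommMonoid M] (m : ℕ) [NeZero m]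
    (g : ZMod m → M) : ∑ i ∈ range m, g i = ∑ x : ZMod m, g x :=
  sum_nbij' (fun i => i) ZMod.val (fun _ _ => mem_univ _)
    (fun x _ => mem_range.mpr (ZMod.val_lt x))
    (fun _ hi => ZMod.val_cast_of_lt (mem_range.mp hi)) (fun x _ => ZMod.natCast_zmod_val x)
    (fun _ _ => rfl)

noncomputable def dirichletPartialSum (f : ℕ → ℝ) (N : ℕ) (σ : ℝ) : ℝ :=
  ∑ n ∈ range N, f n * (n : ℝ) ^ (-σ)

namespace dirichletPartialSum

variable {f : ℕ → ℝ} {B : ℝ}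

theorem abs_sub_le (hf : ∀ N, |∑ n ∈ range N, f n| ≤ B) {N M : ℕ} (hN : 0 < N) (hNM : N ≤ M)
    {σ : ℝ} (hσ : 0 ≤ σ) :
    |dirichletPartialSum f M σ - dirichletPartialSum f N σ| ≤ 2 * B * (N : ℝ) ^ (-σ) := by
  have htail : dirichletPartialSum f M σ - dirichletPartialSum f N σ
      = ∑ i ∈ range (M - N), ((N + i : ℕ) : ℝ) ^ (-σ) • f (N + i) := by
    simp only [dirichletPartialSum, smul_eq_mul, mul_comm (f _)]
    rw [← sum_Ico_eq_sub _ hNM, sum_Ico_eq_sum_range]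
  have hanti : Antitone fun i : ℕ => ((N + i : ℕ) : ℝ) ^ (-σ) := fun i j hij =>
    Real.rpow_le_rpow_of_nonpos (by positivity) (by gcongr) (neg_nonpos.mpr hσ)
  have hwindow : ∀ k, ‖∑ i ∈ range k, f (N + i)‖ ≤ 2 * B := fun k => by
    rw [Real.norm_eq_abs, ← add_sub_cancel_left (∑ i ∈ range N, f i) (∑ i ∈ range k, f (N + i)),
      ← sum_range_add]
    linarith [abs_sub (∑ i ∈ range (N + k), f i) (∑ i ∈ range N, f i), hf (N + k), hf N]
  simpa [htail] using norm_sum_range_smul_le_of_antitone hanti (fun i => by positivity) hwindow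
    (M - N)

theorem uniformCauchySeqOn (hf : ∀ N, |∑ n ∈ range N, f n| ≤ B) {σ₀ : ℝ} (hσ₀ : 0 < σ₀) :
    UniformCauchySeqOn (dirichletPartialSum f) atTop (Ici σ₀) := by
  have hB : 0 ≤ B := by simpa using hf 0
  have hlim : Tendsto (fun N : ℕ => 2 * B * (N : ℝ) ^ (-σ₀)) atTop (𝓝 0) := by
    simpa using ((tendsto_rpow_neg_atTop hσ₀).comp tendsto_natCast_atTop_atTop).const_mul
      (2 * B)
  have hbound : ∀ {N M : ℕ}, 0 < N → N ≤ M → ∀ σ ∈ Ici σ₀,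
      dist (dirichletPartialSum f M σ) (dirichletPartialSum f N σ) ≤ 2 * B * (N : ℝ) ^ (-σ₀) :=
    fun {N M} hN hNM σ hσ => (abs_sub_le hf hN hNM (hσ₀.le.trans hσ)).trans <| by
      gcongr
      · exact_mod_cast hN
      · exact hσ
  rw [Metric.uniformCauchySeqOn_iff]
  intro ε hε
  obtain ⟨K, hK⟩ := eventually_atTop.mp (hlim.eventually (gt_mem_nhds hε))
  refine ⟨max K 1, fun m hm n hn σ hσ => ?_⟩
  rcases le_total n m with hnm | hmn
  · exact (hbound (by omega) hnm σ hσ).trans_lt (hK n (le_of_max_le_left hn))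
  · rw [dist_comm]
    exact (hbound (by omega) hmn σ hσ).trans_lt (hK m (le_of_max_le_left hm))

theorem continuousOn (f : ℕ → ℝ) (N : ℕ) : ContinuousOn (dirichletPartialSum f N) (Ioi 0) :=
  continuousOn_finsetSum _ fun n _ _ hσ =>
    ((Real.continuousAt_const_rpow' (neg_ne_zero.mpr (ne_of_gt hσ))).comp
      continuousAt_neg).const_mul (f n) |>.continuousWithinAt

theorem exists_tendsto_of_bounded (hf : ∀ N, |∑ n ∈ range N, f n| ≤ B) {σ₀ : ℝ} (hσ₀ : 0 < σ₀)
    {g : ℝ → ℝ} (hg : ∀ σ > σ₀, Tendsto (fun N => dirichletPartialSum f N σ) atTop (𝓝 (g σ))) :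
    ∃ ℓ, Tendsto (fun N => dirichletPartialSum f N σ₀) atTop (𝓝 ℓ) ∧
      Tendsto g (𝓝[>] σ₀) (𝓝 ℓ) := by
  set G := fun σ => limUnder atTop fun N => dirichletPartialSum f N σ
  have hcauchy := uniformCauchySeqOn hf hσ₀
  have hG : ∀ σ ∈ Ici σ₀, Tendsto (fun N => dirichletPartialSum f N σ) atTop (𝓝 (G σ)) :=
    fun σ hσ => tendsto_nhds_limUnder (cauchySeq_tendsto_of_complete (hcauchy.cauchySeq hσ))
  have hGcont : ContinuousOn G (Ici σ₀) :=
    (hcauchy.tendstoUniformlyOn_of_tendsto hG).continuousOn <| Frequently.of_forall fun N =>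
      (continuousOn f N).mono fun σ hσ => hσ₀.trans_le hσ
  refine ⟨G σ₀, hG σ₀ self_mem_Ici, ?_⟩
  refine ((hGcont σ₀ self_mem_Ici).tendsto.mono_left
    (nhdsWithin_mono _ Ioi_subset_Ici_self)).congr' ?_
  filter_upwards [self_mem_nhdsWithin] with σ hσ
  exact tendsto_nhds_unique (hG σ (Ioi_subset_Ici_self hσ)) (hg σ hσ)

end dirichletPartialSum

namespace DirichletCharacter

variable {N : ℕ} {χ : DirichletCharacter ℂ N} {f : ℕ → ℝ}

theorem abs_le_one_of_eq_ofReal (hχf : ∀ n : ℕ, χ n = f n) (n : ℕ) : |f n| ≤ 1 := by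
  simpa [hχf] using χ.norm_le_one n

theorem abs_sum_range_le_of_eq_ofReal [NeZero N] (hχf : ∀ n : ℕ, χ n = f n) (hχ : χ ≠ 1)
    (n : ℕ) : |∑ i ∈ range n, f i| ≤ N := by
  have hperiodic : Function.Periodic f N := fun i => ofReal_injective <| by
    rw [← hχf, ← hχf, Nat.cast_add, ZMod.natCast_self, add_zero]
  have hsum : ∑ i ∈ range N, f i = 0 := by
    have := χ.sum_eq_zero_of_ne_one hχ
    rw [← sum_range_eq_sum_zmod] at this
    simp only [hχf] at this
    exact_mod_cast this
  calc |∑ i ∈ range n, f i| ≤ ∑ i ∈ range N, |f i| :=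
        abs_sum_range_le_of_periodic (NeZero.pos N) hperiodic hsum n
    _ ≤ ∑ i ∈ range N, 1 := sum_le_sum fun i _ => abs_le_one_of_eq_ofReal hχf i
    _ = N := by simp

theorem tendsto_dirichletPartialSum_of_one_lt [NeZero N] (hχf : ∀ n : ℕ, χ n = f n) {σ : ℝ}
    (hσ : 1 < σ) :
    Tendsto (fun n => (dirichletPartialSum f n σ : ℂ)) atTop (𝓝 (χ.LFunction σ)) := by
  have hterm : ∀ n, LSeries.term (χ ·) σ n = ((f n * (n : ℝ) ^ (-σ) : ℝ) : ℂ) := by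
    rintro (_ | n)
    · simp [Real.zero_rpow (by linarith : -σ ≠ 0)]
    · rw [LSeries.term_of_ne_zero n.succ_ne_zero, hχf, ofReal_mul,
        ofReal_cpow (Nat.cast_nonneg _), ofReal_neg, cpow_neg, div_eq_mul_inv]
      norm_cast
  rw [χ.LFunction_eq_LSeries (by simpa using hσ), LSeries]
  simpa [dirichletPartialSum, hterm] using
    (χ.LSeriesSummable_of_one_lt_re (s := σ) (by simpa using hσ)).hasSum.tendsto_sum_nat

theorem tendsto_LFunction_nhdsGT_one [NeZero N] (hχ : χ ≠ 1) :
    Tendsto (fun σ : ℝ => χ.LFunction σ) (𝓝[>] 1) (𝓝 (χ.LFunction 1)) :=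
  ((χ.differentiableAt_LFunction 1 (.inr hχ)).continuousAt.comp_of_eq
    continuous_ofReal.continuousAt ofReal_one).tendsto.mono_left nhdsWithin_le_nhds

theorem exists_tendsto_dirichletPartialSum_one [NeZero N] (hχf : ∀ n : ℕ, χ n = f n)
    (hχ : χ ≠ 1) :
    ∃ ℓ : ℝ, Tendsto (fun n => dirichletPartialSum f n 1) atTop (𝓝 ℓ) ∧ χ.LFunction 1 = ℓ := by
  have hre : ∀ σ > 1, Tendsto (fun n => dirichletPartialSum f n σ) atTop
      (𝓝 (χ.LFunction σ).re) := fun σ hσ =>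
    (continuous_re.tendsto _).comp (tendsto_dirichletPartialSum_of_one_lt hχf hσ)
  have hreal : ∀ σ > (1 : ℝ), ((χ.LFunction σ).re : ℂ) = χ.LFunction σ := fun σ hσ =>
    tendsto_nhds_unique ((continuous_ofReal.tendsto _).comp (hre σ hσ))
      (tendsto_dirichletPartialSum_of_one_lt hχf hσ)
  obtain ⟨ℓ, hℓ, hreℓ⟩ := dirichletPartialSum.exists_tendsto_of_bounded
    (abs_sum_range_le_of_eq_ofReal hχf hχ) one_pos hre
  refine ⟨ℓ, hℓ, tendsto_nhds_unique (tendsto_LFunction_nhdsGT_one hχ)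
    (((continuous_ofReal.tendsto ℓ).comp hreℓ).congr' ?_)⟩
  filter_upwards [self_mem_nhdsWithin] with σ hσ
  exact hreal σ hσ

theorem re_LFunction_nonneg_of_one_lt [NeZero N] (hχf : ∀ n : ℕ, χ n = f n) {σ : ℝ}
    (hσ : 1 < σ) : 0 ≤ (χ.LFunction σ).re := by
  have hs : 1 < (σ : ℂ).re := by simpa using hσ
  have hfactor : ∀ q : ℕ, (1 - χ q * (q : ℂ) ^ (-(σ : ℂ)))⁻¹ =
      (((1 - f q * (q : ℝ) ^ (-σ))⁻¹ : ℝ) : ℂ) := fun q => by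
    rw [hχf, ofReal_inv, ofReal_sub, ofReal_mul, ofReal_cpow (Nat.cast_nonneg q)]
    push_cast
    ring
  rw [χ.LFunction_eq_LSeries hs]
  refine ge_of_tendsto' ((continuous_re.tendsto _).comp (χ.LSeries_eulerProduct hs)) fun n => ?_
  simp only [Function.comp_apply, hfactor, ← ofReal_prod, ofReal_re]
  refine prod_nonneg fun q hq => inv_nonneg.mpr (sub_nonneg.mpr ?_)
  have hq : (1 : ℝ) ≤ q := by exact_mod_cast (Nat.prime_of_mem_primesBelow hq).one_le
  calc f q * (q : ℝ) ^ (-σ) ≤ 1 * 1 :=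
        mul_le_mul (le_of_abs_le (abs_le_one_of_eq_ofReal hχf q))
          (Real.rpow_le_one_of_one_le_of_nonpos hq (by linarith)) (by positivity) zero_le_one
    _ = 1 := one_mul 1

theorem re_LFunction_one_nonneg [NeZero N] (hχf : ∀ n : ℕ, χ n = f n) (hχ : χ ≠ 1) :
    0 ≤ (χ.LFunction 1).re :=
  ge_of_tendsto ((continuous_re.tendsto _).comp (tendsto_LFunction_nhdsGT_one hχ)) <| by
    filter_upwards [self_mem_nhdsWithin] with σ hσ using re_LFunction_nonneg_of_one_lt hχf hσ

end DirichletCharacter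

noncomputable def quadraticDirichletCharacter (p : ℕ) [Fact p.Prime] : DirichletCharacter ℂ p :=
  (quadraticChar (ZMod p)).ringHomComp (Int.castRingHom ℂ)

theorem quadraticDirichletCharacter_natCast (p : ℕ) [Fact p.Prime] (n : ℕ) :
    quadraticDirichletCharacter p n = ((legendreSym p n : ℝ) : ℂ) := by
  simp [quadraticDirichletCharacter, legendreSym]

theorem quadraticDirichletCharacter_ne_one {p : ℕ} [Fact p.Prime] (hp : p ≠ 2) :
    quadraticDirichletCharacter p ≠ 1 :=
  (MulChar.ringHomComp_ne_one_iff Int.cast_injective).mpr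
    (quadraticChar_ne_one (by rwa [ZMod.ringChar_zmod_n]))

/-- Dirichlet §4: L(1,χ) = Σ (n/p)/n is positive for the quadratic character mod p. -/
theorem L_one_quadratic_pos (p : ℕ) [Fact p.Prime] (hodd : p ≠ 2) :
    ∃ ℓ : ℝ, Filter.Tendsto
      (fun N => ∑ n ∈ Finset.range N, (legendreSym p (n : ℤ) : ℝ) / n)
      Filter.atTop (nhds ℓ) ∧ 0 < ℓ := by
  set χ := quadraticDirichletCharacter p
  have hχf := quadraticDirichletCharacter_natCast p
  have hχ := quadraticDirichletCharacter_ne_one hodd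
  obtain ⟨ℓ, hℓ, hL⟩ := χ.exists_tendsto_dirichletPartialSum_one hχf hχ
  refine ⟨ℓ, by simpa [dirichletPartialSum, Real.rpow_neg_one, div_eq_mul_inv] using hℓ, ?_⟩
  have hnonneg : 0 ≤ ℓ := by simpa [hL] using χ.re_LFunction_one_nonneg hχf hχ
  have hne : ℓ ≠ 0 := by exact_mod_cast hL ▸ χ.LFunction_apply_one_ne_zero hχ
  exact hnonneg.lt_of_ne' hne
end
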